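/- Let A ∈ ℂ^{n×n} and ε > 0 be such that the strict structured ε-pseudospectrum Λ'_{S,ε}(A) has exactly n connected components. Then for every z ∈ ℂ^s with ‖z‖ < ε, all eigenvalues of A + M_S(z) are simple (algebraic multiplicity 1). -/

import Mathlib

open Matrix Polynomial Set
open scoped Classical

noncomputable def MS {n : ℕ} (S : Finset (Fin n × Fin n))
    (z : EuclideanSpace ℂ {p : Fin n × Fin n // p ∈ S}) : Matrix (Fin n) (Fin n) ℂ :=
  fun i j => if h : (i, j) ∈ S then z ⟨(i, j), h⟩ else 0

/-- The strict structured ε-pseudospectrum `Λ'_{S,ε}(A)`. -/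
noncomputable def structPseudoStrict {n : ℕ} (A : Matrix (Fin n) (Fin n) ℂ)
    (S : Finset (Fin n × Fin n)) (ε : ℝ) : Set ℂ :=
  ⋃ z ∈ {z : EuclideanSpace ℂ {p : Fin n × Fin n // p ∈ S} | ‖z‖ < ε},
    spectrum ℂ (A + MS S z)

/-!
The roots of a monic polynomial of fixed degree depend continuously on its coefficients, in both
directions: near a root of the limit polynomial there are roots of nearby polynomials, and all
roots of nearby polynomials are close to roots of the limit. Hence, as `z` ranges over the
connected ball `‖z‖ < ε`, the set of `z` for which `A + M_S(z)` has an eigenvalue in a given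
relatively clopen part of `Λ'_{S,ε}(A)` is clopen, so it is empty or everything. When
`Λ'_{S,ε}(A)` has finitely many components they are relatively clopen, so each of the `n`
components contains an eigenvalue of every `A + M_S(z)`. These `n` eigenvalues are distinct, so
they exhaust the `n` roots of the characteristic polynomial, which are therefore simple.
-/

namespace Polynomial

variable {K : Type*} [NormedField K]

theorem Monic.norm_lt_of_isRoot {f : K[X]} (hf : f.Monic) {a : K} (ha : f.IsRoot a) :
    ‖a‖ < 1 + ∑ k ∈ Finset.range f.natDegree, ‖f.coeff k‖ := by
  have hsup : (Finset.range f.natDegree).sup (‖f.coeff ·‖₊) ≤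
      ∑ k ∈ Finset.range f.natDegree, ‖f.coeff k‖₊ :=
    Finset.sup_le fun k hk =>
      Finset.single_le_sum (f := fun k => ‖f.coeff k‖₊) (fun _ _ => zero_le) hk
  have hbound := ha.norm_lt_cauchyBound hf.ne_zero
  rw [cauchyBound, hf.leadingCoeff, nnnorm_one, div_one] at hbound
  have := hbound.trans_le (add_le_add_left hsup 1)
  rw [← NNReal.coe_lt_coe] at this
  push_cast at this
  linarith

theorem exists_pos_forall_exists_mem_roots_norm_sub_lt [IsAlgClosed K] (n : ℕ) {η : ℝ}
    (hη : 0 < η) (R : ℝ) :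
    ∃ κ > 0, ∀ f g : K[X], f.Monic → g.Monic → f.natDegree = n → g.natDegree = n →
      (∀ k, ‖g.coeff k - f.coeff k‖ < κ) → ∀ a, f.IsRoot a → ‖a‖ ≤ R →
        ∃ b ∈ g.roots, ‖a - b‖ < η := by
  -- `κ` makes the bound `((n + 1) κ) ^ (1 / n) * max ‖a‖ 1` of
  -- `exists_roots_norm_sub_lt_of_norm_coeff_sub_lt` at most `η`.
  set M := max R 1
  have hM : 0 < M := lt_max_of_lt_right one_pos
  refine ⟨(η / M) ^ n / (n + 1), by positivity, ?_⟩
  rintro f g hf hg rfl hgf hcoeff a ha haR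
  have hn : f.natDegree ≠ 0 := fun h => by
    simp [hf.natDegree_eq_zero.mp h] at ha
  obtain ⟨b, hb, hab⟩ := exists_roots_norm_sub_lt_of_norm_coeff_sub_lt (by positivity)
    (IsRoot.def.mp ha) hf hg hgf hcoeff (IsAlgClosed.splits g)
  refine ⟨b, hb, hab.trans_le ?_⟩
  rw [mul_div_cancel₀ _ (by positivity), Real.pow_rpow_inv_natCast (by positivity) hn]
  calc η / M * max ‖a‖ 1 ≤ η / M * M := by gcongr; exact max_le_max_right 1 haR
    _ = η := div_mul_cancel₀ η hM.ne'

end Polynomial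

open Filter Topology

structure IsMonicContinuousFamily {K X : Type*} [NormedField K] [TopologicalSpace X]
    (p : X → K[X]) (n : ℕ) : Prop where
  monic : ∀ x, (p x).Monic
  natDegree_eq : ∀ x, (p x).natDegree = n
  continuous_coeff : ∀ k, Continuous fun x => (p x).coeff k

namespace IsMonicContinuousFamily

variable {K X : Type*} [NormedField K] [TopologicalSpace X] {p : X → K[X]} {n : ℕ}

theorem eventually_norm_coeff_sub_lt (hp : IsMonicContinuousFamily p n) (x₀ : X) {κ : ℝ}
    (hκ : 0 < κ) : ∀ᶠ x in 𝓝 x₀, ∀ k, ‖(p x).coeff k - (p x₀).coeff k‖ < κ := by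
  have hlow : ∀ᶠ x in 𝓝 x₀, ∀ k ∈ Finset.range (n + 1),
      ‖(p x).coeff k - (p x₀).coeff k‖ < κ :=
    (Finset.eventually_all _).mpr fun k _ =>
      by simpa [dist_eq_norm] using
        (hp.continuous_coeff k).continuousAt.eventually (Metric.ball_mem_nhds _ hκ)
  filter_upwards [hlow] with x hx k
  by_cases hk : k < n + 1
  · exact hx k (Finset.mem_range.mpr hk)
  · have hzero : ∀ y, (p y).coeff k = 0 := fun y =>
      coeff_eq_zero_of_natDegree_lt (by rw [hp.natDegree_eq]; omega)
    simpa [hzero] using hκ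

theorem exists_eventually_norm_root_le (hp : IsMonicContinuousFamily p n) (x₀ : X) :
    ∃ R, ∀ᶠ x in 𝓝 x₀, ∀ a, (p x).IsRoot a → ‖a‖ ≤ R := by
  refine ⟨1 + ∑ k ∈ Finset.range n, (‖(p x₀).coeff k‖ + 1), ?_⟩
  filter_upwards [hp.eventually_norm_coeff_sub_lt x₀ one_pos] with x hx a ha
  refine ((hp.monic x).norm_lt_of_isRoot ha).le.trans ?_
  rw [hp.natDegree_eq]
  gcongr with k
  calc ‖(p x).coeff k‖ ≤ ‖(p x₀).coeff k‖ + ‖(p x).coeff k - (p x₀).coeff k‖ :=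
        norm_le_insert' _ _
    _ ≤ ‖(p x₀).coeff k‖ + 1 := by gcongr; exact (hx k).le

variable [IsAlgClosed K]

theorem isOpen_setOf_exists_mem_roots (hp : IsMonicContinuousFamily p n) {U : Set K}
    (hU : IsOpen U) : IsOpen {x | ∃ a ∈ (p x).roots, a ∈ U} := by
  refine isOpen_iff_eventually.mpr ?_
  rintro x₀ ⟨a, ha, haU⟩
  obtain ⟨η, hη, hball⟩ := Metric.isOpen_iff.mp hU a haU
  obtain ⟨κ, hκ, hnear⟩ := exists_pos_forall_exists_mem_roots_norm_sub_lt (K := K) n hη ‖a‖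
  filter_upwards [hp.eventually_norm_coeff_sub_lt x₀ hκ] with x hx
  obtain ⟨b, hb, hab⟩ := hnear (p x₀) (p x) (hp.monic x₀) (hp.monic x) (hp.natDegree_eq x₀)
    (hp.natDegree_eq x) hx a (isRoot_of_mem_roots ha) le_rfl
  exact ⟨b, hb, hball (by rwa [Metric.mem_ball, dist_eq_norm, norm_sub_rev])⟩

theorem isOpen_setOf_forall_mem_roots (hp : IsMonicContinuousFamily p n) {U : Set K}
    (hU : IsOpen U) : IsOpen {x | ∀ a ∈ (p x).roots, a ∈ U} := by
  refine isOpen_iff_eventually.mpr fun x₀ hx₀ => ?_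
  obtain ⟨η, hη, hthick⟩ :=
    (p x₀).roots.toFinset.finite_toSet.isCompact.exists_thickening_subset_open hU
      fun a ha => hx₀ a (Multiset.mem_toFinset.mp ha)
  obtain ⟨R, hR⟩ := hp.exists_eventually_norm_root_le x₀
  obtain ⟨κ, hκ, hnear⟩ := exists_pos_forall_exists_mem_roots_norm_sub_lt (K := K) n hη R
  filter_upwards [hR, hp.eventually_norm_coeff_sub_lt x₀ hκ] with x hxR hx a ha
  have ha' := isRoot_of_mem_roots ha
  obtain ⟨b, hb, hab⟩ := hnear (p x) (p x₀) (hp.monic x) (hp.monic x₀) (hp.natDegree_eq x)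
    (hp.natDegree_eq x₀) (fun k => by rw [norm_sub_rev]; exact hx k) a ha' (hxR a ha')
  exact hthick (Metric.mem_thickening_iff.mpr
    ⟨b, Multiset.mem_toFinset.mpr hb, by rwa [dist_eq_norm]⟩)

theorem exists_mem_roots_of_isClopen [PreconnectedSpace X] (hp : IsMonicContinuousFamily p n)
    {Λ C : Set K} (hΛ : ∀ x, ∀ a ∈ (p x).roots, a ∈ Λ)
    (hC : IsClopen ((↑) ⁻¹' C : Set Λ)) {x₀ : X} (h₀ : ∃ a ∈ (p x₀).roots, a ∈ C) (x : X) :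
    ∃ a ∈ (p x).roots, a ∈ C := by
  obtain ⟨U, hU, hUC⟩ := isOpen_induced_iff.mp hC.isOpen
  obtain ⟨V, hV, hVC⟩ := isOpen_induced_iff.mp hC.compl.isOpen
  have hmemU : ∀ x, ∀ a ∈ (p x).roots, a ∈ U ↔ a ∈ C := fun x a ha =>
    Set.ext_iff.mp hUC ⟨a, hΛ x a ha⟩
  have hmemV : ∀ x, ∀ a ∈ (p x).roots, a ∈ V ↔ a ∉ C := fun x a ha =>
    Set.ext_iff.mp hVC ⟨a, hΛ x a ha⟩
  have hset : {x | ∃ a ∈ (p x).roots, a ∈ C} = {x | ∃ a ∈ (p x).roots, a ∈ U} := by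
    ext x
    exact exists_congr fun a => and_congr_right fun ha => (hmemU x a ha).symm
  have hcompl : {x | ∃ a ∈ (p x).roots, a ∈ C}ᶜ = {x | ∀ a ∈ (p x).roots, a ∈ V} := by
    ext x
    simp only [Set.mem_compl_iff, Set.mem_ofPred_eq, not_exists, not_and]
    exact forall₂_congr fun a ha => (hmemV x a ha).symm
  have hclopen : IsClopen {x | ∃ a ∈ (p x).roots, a ∈ C} :=
    ⟨isOpen_compl_iff.mp (hcompl ▸ hp.isOpen_setOf_forall_mem_roots hV),
      hset ▸ hp.isOpen_setOf_exists_mem_roots hU⟩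
  exact Set.eq_univ_iff_forall.mp (hclopen.eq_univ ⟨x₀, h₀⟩) x

end IsMonicContinuousFamily

section ConnectedComponents

variable {α : Type*} [TopologicalSpace α]

theorem isClopen_connectedComponent_of_finite
    (hfin : (Set.range (connectedComponent : α → Set α)).Finite) (x : α) :
    IsClopen (connectedComponent x) := by
  refine ⟨isClosed_connectedComponent, isClosed_compl_iff.mp ?_⟩
  have hcompl : (connectedComponent x)ᶜ =
      ⋃ T ∈ Set.range connectedComponent \ {connectedComponent x}, T := by
    ext y
    simp only [mem_compl_iff, mem_iUnion, Set.mem_sdiff, mem_range, mem_singleton_iff, exists_prop]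
    constructor
    · exact fun hy => ⟨_, ⟨⟨y, rfl⟩, fun h => hy (h ▸ mem_connectedComponent)⟩,
        mem_connectedComponent⟩
    · rintro ⟨_, ⟨⟨z, rfl⟩, hne⟩, hyz⟩ hyx
      exact hne ((connectedComponent_eq hyz).trans (connectedComponent_eq hyx).symm)
  rw [hcompl]
  exact (hfin.subset sdiff_subset).isClosed_biUnion fun T ⟨⟨z, hz⟩, _⟩ =>
    hz ▸ isClosed_connectedComponent

theorem isClopen_preimage_connectedComponentIn {s : Set α}
    (hfin : {T | ∃ w ∈ s, T = connectedComponentIn s w}.Finite) {w : α} (hw : w ∈ s) :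
    IsClopen (((↑) : s → α) ⁻¹' connectedComponentIn s w) := by
  rw [connectedComponentIn_eq_image hw, preimage_image_eq _ Subtype.val_injective]
  refine isClopen_connectedComponent_of_finite ?_ _
  refine Finite.of_finite_image (hfin.subset ?_) (image_injective.mpr Subtype.val_injective).injOn
  rintro _ ⟨_, ⟨y, rfl⟩, rfl⟩
  exact ⟨y, y.2, (connectedComponentIn_eq_image y.2).symm⟩

theorem ncard_connectedComponentIn_le_card {s : Set α} {t : Finset α}
    (h : ∀ w ∈ s, ∃ a ∈ t, a ∈ connectedComponentIn s w) :
    {T | ∃ w ∈ s, T = connectedComponentIn s w}.ncard ≤ t.card := by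
  have hsub : {T | ∃ w ∈ s, T = connectedComponentIn s w} ⊆ connectedComponentIn s '' t := by
    rintro _ ⟨w, hw, rfl⟩
    obtain ⟨a, ha, haw⟩ := h w hw
    exact ⟨a, ha, (connectedComponentIn_eq haw).symm⟩
  calc _ ≤ (connectedComponentIn s '' t).ncard := ncard_le_ncard hsub (t.finite_toSet.image _)
    _ ≤ t.card := (ncard_image_le t.finite_toSet).trans (ncard_coe_finset t).le

end ConnectedComponents

theorem Continuous.matrix_charpoly_coeff {X R ι : Type*} [TopologicalSpace X] [CommRing R]
    [TopologicalSpace R] [IsTopologicalRing R] [Fintype ι] [DecidableEq ι]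
    {M : X → Matrix ι ι R} (hM : Continuous M) (k : ℕ) :
    Continuous fun x => (M x).charpoly.coeff k := by
  have huniv : ∀ x, (M x).charpoly.coeff k =
      MvPolynomial.eval (fun ij : ι × ι => M x ij.1 ij.2) ((charpoly.univ R ι).coeff k) :=
    fun x => by rw [MvPolynomial.eval, charpoly.univ_coeff_eval₂Hom]; rfl
  simp only [huniv]
  exact MvPolynomial.continuous_eval _ |>.comp
    (continuous_pi fun ij => hM.matrix_elem ij.1 ij.2)

theorem Continuous.isMonicContinuousFamily_charpoly {X K ι : Type*} [TopologicalSpace X]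
    [NormedField K] [Fintype ι] [DecidableEq ι] {M : X → Matrix ι ι K} (hM : Continuous M) :
    IsMonicContinuousFamily (fun x => (M x).charpoly) (Fintype.card ι) :=
  ⟨fun _ => charpoly_monic _, fun _ => charpoly_natDegree_eq_dim _, hM.matrix_charpoly_coeff⟩

theorem Matrix.mem_roots_charpoly_iff_mem_spectrum {ι K : Type*} [Fintype ι] [DecidableEq ι]
    [Field K] {M : Matrix ι ι K} {a : K} : a ∈ M.charpoly.roots ↔ a ∈ spectrum K M := by
  rw [mem_roots (charpoly_monic M).ne_zero, mem_spectrum_iff_isRoot_charpoly]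

theorem continuous_MS {n : ℕ} (S : Finset (Fin n × Fin n)) : Continuous (MS S) := by
  refine continuous_pi fun i => continuous_pi fun j => ?_
  by_cases h : (i, j) ∈ S
  · simp only [MS, h, dif_pos]
    fun_prop
  · simpa only [MS, h, dif_neg, not_false_iff] using continuous_const

theorem simple_eigenvalues_of_n_components_general {n : ℕ} (A : Matrix (Fin n) (Fin n) ℂ)
    (S : Finset (Fin n × Fin n)) (ε : ℝ)
    (hcomp : {T : Set ℂ | ∃ w ∈ structPseudoStrict A S ε,
        T = connectedComponentIn (structPseudoStrict A S ε) w}.ncard = n) :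
    ∀ z : EuclideanSpace ℂ {p : Fin n × Fin n // p ∈ S}, ‖z‖ < ε →
      ∀ ξ ∈ spectrum ℂ (A + MS S z),
        (A + MS S z).charpoly.rootMultiplicity ξ = 1 := by
  intro z hz ξ hξ
  set Λ := structPseudoStrict A S ε
  let B := Metric.ball (0 : EuclideanSpace ℂ {p : Fin n × Fin n // p ∈ S}) ε
  have : PreconnectedSpace B :=
    isPreconnected_iff_preconnectedSpace.mp (convex_ball _ _).isPreconnected
  let p : B → ℂ[X] := fun w => (A + MS S w).charpoly
  have hp : IsMonicContinuousFamily p n := by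
    simpa using ((continuous_const.add (continuous_MS S)).comp
      continuous_subtype_val).isMonicContinuousFamily_charpoly
  have hpΛ : ∀ w, ∀ a ∈ (p w).roots, a ∈ Λ := fun w a ha =>
    mem_biUnion (mem_ball_zero_iff.mp w.2) (mem_roots_charpoly_iff_mem_spectrum.mp ha)
  have hcard : n ≤ (p ⟨z, mem_ball_zero_iff.mpr hz⟩).roots.toFinset.card := by
    rcases Set.finite_or_infinite {T | ∃ w ∈ Λ, T = connectedComponentIn Λ w} with hfin | hinf
    · refine hcomp.ge.trans <| ncard_connectedComponentIn_le_card fun w hw => ?_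
      obtain ⟨z₀, hz₀, hw₀⟩ := mem_iUnion₂.mp hw
      obtain ⟨a, ha, haw⟩ := hp.exists_mem_roots_of_isClopen hpΛ
        (isClopen_preimage_connectedComponentIn hfin hw) (x₀ := ⟨z₀, mem_ball_zero_iff.mpr hz₀⟩)
        ⟨w, mem_roots_charpoly_iff_mem_spectrum.mpr hw₀, mem_connectedComponentIn hw⟩ _
      exact ⟨a, Multiset.mem_toFinset.mpr ha, haw⟩
    · simp [← hcomp, hinf.ncard]
  have hnodup : (A + MS S z).charpoly.roots.Nodup :=
    Multiset.toFinset_card_eq_card_iff_nodup.mp <| le_antisymm (Multiset.toFinset_card_le _) <| by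
      rwa [IsAlgClosed.card_roots_eq_natDegree, charpoly_natDegree_eq_dim, Fintype.card_fin]
  rw [← count_roots]
  exact Multiset.count_eq_one_of_mem hnodup (mem_roots_charpoly_iff_mem_spectrum.mpr hξ)

/-- If the strict structured ε-pseudospectrum has exactly `n` connected components, then every
matrix `A + M_S(z)` with `‖z‖ < ε` has only simple eigenvalues. -/
theorem simple_eigenvalues_of_n_components {n : ℕ} (A : Matrix (Fin n) (Fin n) ℂ)
    (S : Finset (Fin n × Fin n)) (ε : ℝ) (hε : 0 < ε)
    (hcomp : {T : Set ℂ | ∃ w ∈ structPseudoStrict A S ε,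
        T = connectedComponentIn (structPseudoStrict A S ε) w}.ncard = n) :
    ∀ z : EuclideanSpace ℂ {p : Fin n × Fin n // p ∈ S}, ‖z‖ < ε →
      ∀ ξ ∈ spectrum ℂ (A + MS S z),
        (A + MS S z).charpoly.rootMultiplicity ξ = 1 :=
  simple_eigenvalues_of_n_components_general A S ε hcomp
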